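/- arXiv:1312.1753 — 2 statements merged into one kernel-verified Lean document; each statement's English description precedes it below -/
import Mathlib

section
/- Let ℓ ≥ 0 and b ≥ 2 be integers. Let G be a graph with n ≥ (3ℓ+1)·b vertices, and let (T, {B_z : z ∈ V(T)}) be a tree decomposition of G such that the tree T has maximum degree at most 3 and every bag satisfies |B_z| ≤ b. Then there is a set R of exactly ℓ edges of T such that for each of the ℓ+1 connected components Q of T − R, the number of vertices of G in G[Q] satisfies |G[Q]| ≥ (n − ℓb)/(2ℓ+1). -/
/-!
Write `w(Q) = |G[Q]|` and `t = (n - ℓb)/(2ℓ+1)`. Starting from `S = V(T)`, we keep a subtree `S`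
with `w(S) ≥ (2k+1)t + kb` while `k` cuts remain. A vertex of `G[S]` outside `B_x` has its
subtree of bags in a single branch at `x`, so `w(S) ≤ b + ∑_c w(S ∩ T(c,x))` over the at most
three neighbours `c` of `x`. Hence some edge `xy` of `S` has a side `S ∩ T(x,y)` of weight at
least `t`; choosing `T(x,y)` minimal, the at most two other branches at `x` weigh less than `t`,
so cutting `xy` leaves `S ∩ T(y,x)` with weight at least `w(S) - 2t - b`, and we recurse on it.
The parts cut off, together with the last `S`, are the components of `T - R`.
-/

open SimpleGraph

/-- `(T, B)` is a tree decomposition of the graph `G`: `T` is a tree, every vertex of `G`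
lies in some bag, both endpoints of every edge of `G` lie in a common bag, and for every
vertex `v` of `G` the set of nodes of `T` whose bag contains `v` induces a nonempty
connected subtree of `T`. -/
def IsTreeDecomp {V α : Type*} (G : SimpleGraph V) (T : SimpleGraph α) (B : α → Set V) : Prop :=
  T.IsTree ∧
  (∀ v : V, ∃ z : α, v ∈ B z) ∧
  (∀ v w : V, G.Adj v w → ∃ z : α, v ∈ B z ∧ w ∈ B z) ∧
  (∀ v : V, (T.induce {z : α | v ∈ B z}).Connected)

/-- `G[Q]`: the set of vertices of `G` that lie in some bag indexed by a node of `Q`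
and lie in no bag indexed by a node outside `Q`. -/
def bagVertices {V α : Type*} (B : α → Set V) (Q : Set α) : Set V :=
  {v : V | (∃ z ∈ Q, v ∈ B z) ∧ ∀ z ∉ Q, v ∉ B z}

/-- `T(x,y)`: the node set of the connected component of `T − xy` containing `x`. -/
def side {α : Type*} (T : SimpleGraph α) (x y : α) : Set α :=
  {z : α | (T.deleteEdges {s(x, y)}).Reachable x z}

section Side

variable {α : Type*} {T : SimpleGraph α} {u v x y z c : α}

lemma mem_side_self : x ∈ side T x y := Reachable.refl x

lemma mem_side_of_walk (p : T.Walk u v) (hp : s(x, y) ∉ p.edges) (hu : u ∈ side T x y) :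
    v ∈ side T x y :=
  Reachable.trans hu (reachable_deleteEdges_iff_exists_walk.mpr ⟨p, hp⟩)

lemma mem_side_of_adj (hu : u ∈ side T x y) (h : T.Adj u v) (hne : s(u, v) ≠ s(x, y)) :
    v ∈ side T x y :=
  mem_side_of_walk h.toWalk (by simpa using hne.symm) hu

lemma not_reachable_deleteEdges_of_adj (hT : T.IsAcyclic) (h : T.Adj x y) :
    ¬ (T.deleteEdges {s(x, y)}).Reachable x y :=
  isBridge_iff.mp (isAcyclic_iff_forall_adj_isBridge.mp hT h)

lemma notMem_side (hT : T.IsAcyclic) (h : T.Adj x y) : y ∉ side T x y :=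
  not_reachable_deleteEdges_of_adj hT h

lemma disjoint_side (hT : T.IsAcyclic) (h : T.Adj x y) : Disjoint (side T x y) (side T y x) := by
  refine Set.disjoint_left.mpr fun z hx hy => not_reachable_deleteEdges_of_adj hT h (hx.trans ?_)
  rw [side, Sym2.eq_swap] at hy
  exact hy.symm

lemma side_union_side (hT : T.Connected) (h : T.Adj x y) : side T x y ∪ side T y x = .univ := by
  refine Set.eq_univ_of_forall fun z => ?_
  have hxz := (reachable_iff_reflTransGen x z).mp (hT.preconnected x z)
  induction hxz with
  | refl => exact Or.inl mem_side_self
  | @tail w z _ hwz ih =>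
    by_cases he : s(w, z) = s(x, y)
    · rcases Sym2.eq_iff.mp he with ⟨-, rfl⟩ | ⟨-, rfl⟩
      · exact Or.inr mem_side_self
      · exact Or.inl mem_side_self
    · exact ih.imp (mem_side_of_adj · hwz he)
        (mem_side_of_adj · hwz fun h' => he (h'.trans Sym2.eq_swap))

lemma exists_adj_mem_side (hT : T.Connected) (hz : z ≠ x) : ∃ c, T.Adj x c ∧ z ∈ side T c x := by
  classical
  obtain ⟨p, hp⟩ := (hT.preconnected x z).some.toPath
  cases p with
  | nil => exact absurd rfl hz
  | cons h q =>
    refine ⟨_, h, mem_side_of_walk q (fun he => ?_) mem_side_self⟩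
    exact ((Walk.cons_isPath_iff h q).mp hp).2 (q.snd_mem_support_of_mem_edges he)

lemma mem_side_of_notMem_support (p : T.Walk u v) (hp : x ∉ p.support) (hu : u ∈ side T c x) :
    v ∈ side T c x :=
  mem_side_of_walk p (fun he => hp (p.snd_mem_support_of_mem_edges he)) hu

lemma notMem_support_of_walk_deleteEdges (hT : T.IsAcyclic) (h : T.Adj x c)
    (p : (T.deleteEdges {s(c, x)}).Walk c z) : x ∉ p.support := by
  classical
  intro hx
  exact notMem_side hT h.symm (p.takeUntil x hx).reachable

lemma side_ssubset_side (hT : T.IsAcyclic) (hxc : T.Adj x c) (hcy : c ≠ y) :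
    side T c x ⊂ side T x y := by
  refine ⟨fun z ⟨p⟩ => ?_, fun hsub => notMem_side hT hxc.symm (hsub mem_side_self)⟩
  have hc : c ∈ side T x y := mem_side_of_adj mem_side_self hxc (by simp [hcy, hxc.ne.symm])
  refine mem_side_of_walk (p.mapLe (deleteEdges_le _)) (fun he => ?_) hc
  have hx := (p.mapLe (deleteEdges_le _)).fst_mem_support_of_mem_edges he
  rw [Walk.support_mapLe_eq_support] at hx
  exact notMem_support_of_walk_deleteEdges hT hxc p hx

end Side

section Convex

variable {α : Type*} {T : SimpleGraph α} {S S' : Set α} {u v x y c : α}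

/-- For a tree `T`, the path-convex sets are `∅` and the node sets of subtrees. -/
def IsPathConvex (T : SimpleGraph α) (S : Set α) : Prop :=
  ∀ ⦃u v⦄, u ∈ S → v ∈ S → ∀ p : T.Walk u v, p.IsPath → ∀ z ∈ p.support, z ∈ S

lemma isPathConvex_univ : IsPathConvex T .univ := fun _ _ _ _ _ _ _ _ => trivial

lemma IsPathConvex.inter (hS : IsPathConvex T S) (hS' : IsPathConvex T S') :
    IsPathConvex T (S ∩ S') :=
  fun _ _ hu hv p hp z hz => ⟨hS hu.1 hv.1 p hp z hz, hS' hu.2 hv.2 p hp z hz⟩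

lemma isPathConvex_side (hT : T.IsAcyclic) (h : T.Adj x y) : IsPathConvex T (side T x y) := by
  classical
  intro u v hu hv p hp z hz
  have hy : ∀ w ∈ side T x y, ¬ (T.deleteEdges {s(x, y)}).Reachable w y :=
    fun w hw hwy => notMem_side hT h (hw.trans hwy)
  have he := hp.isTrail.not_mem_edges_of_not_reachable (hy u hu) (hy v hv)
  exact mem_side_of_walk (p.takeUntil z hz) (fun h' => he (p.edges_takeUntil_subset_edges hz h')) hu

lemma IsPathConvex.exists_walk (hS : IsPathConvex T S) (hT : T.Connected) (hu : u ∈ S)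
    (hv : v ∈ S) : ∃ p : T.Walk u v, ∀ z ∈ p.support, z ∈ S := by
  classical
  obtain ⟨p, hp⟩ := (hT.preconnected u v).some.toPath
  exact ⟨p, hS hu hv p hp⟩

lemma IsPathConvex.mem_of_nonempty_inter_side (hS : IsPathConvex T S) (hT : T.IsTree)
    (hx : x ∈ S) (hxc : T.Adj x c) (hne : (S ∩ side T c x).Nonempty) : c ∈ S := by
  classical
  obtain ⟨z, hzS, hz⟩ := hne
  obtain ⟨p, hp⟩ := (hT.connected.preconnected x z).some.toPath
  have hxz : ¬ (T.deleteEdges {s(x, c)}).Reachable x z := fun hr =>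
    Set.disjoint_left.mp (disjoint_side hT.isAcyclic hxc) hr hz
  exact hS hx hzS p hp c
    (p.snd_mem_support_of_mem_edges (p.mem_edges_of_not_reachable_deleteEdges hxz))

end Convex

section Bags

variable {V α : Type*} {T : SimpleGraph α} {B : α → Set V} {S : Set α} {v : V} {x u w : α} {t : ℝ}

lemma bagVertices_univ (hcov : ∀ v : V, ∃ z : α, v ∈ B z) : bagVertices B .univ = .univ :=
  Set.eq_univ_of_forall fun v =>
    ⟨(hcov v).imp fun _ hz => ⟨trivial, hz⟩, fun _ hz => (hz trivial).elim⟩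

lemma nonempty_of_le_ncard_bagVertices (ht : 0 < t) (h : t ≤ (bagVertices B S).ncard) :
    S.Nonempty := by
  have hpos : (bagVertices B S).ncard ≠ 0 := by exact_mod_cast (ht.trans_le h).ne'
  obtain ⟨_, ⟨z, hz, -⟩, -⟩ := Set.nonempty_of_ncard_ne_zero hpos
  exact ⟨z, hz⟩

lemma exists_walk_of_mem_bags (hconn : ∀ v : V, (T.induce {z : α | v ∈ B z}).Connected)
    (hu : v ∈ B u) (hw : v ∈ B w) : ∃ p : T.Walk u w, ∀ z ∈ p.support, v ∈ B z := by
  obtain ⟨p⟩ := (hconn v).preconnected ⟨u, hu⟩ ⟨w, hw⟩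
  refine ⟨p.map (Embedding.induce _).toHom, fun z hz => ?_⟩
  replace hz : z ∈ (p.map (Embedding.induce {z : α | v ∈ B z}).toHom).support := hz
  rw [Walk.support_map, List.mem_map] at hz
  obtain ⟨z', -, rfl⟩ := hz
  exact z'.2

lemma exists_adj_mem_bagVertices_inter_side (hT : T.Connected)
    (hconn : ∀ v : V, (T.induce {z : α | v ∈ B z}).Connected)
    (hv : v ∈ bagVertices B S) (hvx : v ∉ B x) :
    ∃ c, T.Adj x c ∧ v ∈ bagVertices B (S ∩ side T c x) := by
  obtain ⟨⟨z₀, hz₀S, hvz₀⟩, hout⟩ := hv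
  obtain ⟨c, hxc, hz₀c⟩ := exists_adj_mem_side hT fun h : z₀ = x => hvx (h ▸ hvz₀)
  refine ⟨c, hxc, ⟨z₀, ⟨hz₀S, hz₀c⟩, hvz₀⟩, fun z hz hvz => hz ⟨?_, ?_⟩⟩
  · by_contra hzS
    exact hout z hzS hvz
  · obtain ⟨p, hp⟩ := exists_walk_of_mem_bags hconn hvz₀ hvz
    exact mem_side_of_notMem_support p (fun hx => hvx (hp x hx)) hz₀c

lemma ncard_bagVertices_le_add_sum [Finite V] [Fintype (T.neighborSet x)] (hT : T.Connected)
    (hconn : ∀ v : V, (T.induce {z : α | v ∈ B z}).Connected) (S : Set α) :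
    (bagVertices B S).ncard ≤
      (B x).ncard + ∑ c ∈ T.neighborFinset x, (bagVertices B (S ∩ side T c x)).ncard := by
  have hsub : bagVertices B S ⊆
      B x ∪ ⋃ c ∈ T.neighborFinset x, bagVertices B (S ∩ side T c x) := by
    intro v hv
    by_cases hvx : v ∈ B x
    · exact Or.inl hvx
    · obtain ⟨c, hxc, hvc⟩ := exists_adj_mem_bagVertices_inter_side hT hconn hv hvx
      exact Or.inr (Set.mem_iUnion₂.mpr ⟨c, (mem_neighborFinset _ _ _).mpr hxc, hvc⟩)
  calc _ ≤ _ := Set.ncard_le_ncard hsub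
    _ ≤ _ := Set.ncard_union_le _ _
    _ ≤ _ := Nat.add_le_add_left (Finset.set_ncard_biUnion_le _ _) _

end Bags

section HeavySide

variable {V α : Type*} [Finite V] [Fintype α] {T : SimpleGraph α} [DecidableRel T.Adj]
  {B : α → Set V} {S : Set α} {b : ℕ} {t : ℝ}

lemma cast_ncard_bagVertices_le_add_sum {x : α} (hT : T.Connected)
    (hconn : ∀ v : V, (T.induce {z : α | v ∈ B z}).Connected) (hbag : ∀ z, (B z).ncard ≤ b)
    (S : Set α) : ((bagVertices B S).ncard : ℝ) ≤
      b + ∑ c ∈ T.neighborFinset x, ((bagVertices B (S ∩ side T c x)).ncard : ℝ) := by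
  exact_mod_cast (ncard_bagVertices_le_add_sum hT hconn S).trans (Nat.add_le_add_right (hbag x) _)

lemma exists_adj_le_ncard_bagVertices_inter_side (hT : T.IsTree)
    (hconn : ∀ v : V, (T.induce {z : α | v ∈ B z}).Connected) (hdeg : ∀ z, T.degree z ≤ 3)
    (hbag : ∀ z, (B z).ncard ≤ b) (ht : 0 < t) (hS : IsPathConvex T S)
    (hw : 3 * t + b ≤ (bagVertices B S).ncard) :
    ∃ x y, T.Adj x y ∧ x ∈ S ∧ y ∈ S ∧ t ≤ (bagVertices B (S ∩ side T x y)).ncard := by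
  obtain ⟨u, huS⟩ :=
    nonempty_of_le_ncard_bagVertices ht (by linarith [b.cast_nonneg (α := ℝ)] : t ≤ _)
  have hsum := cast_ncard_bagVertices_le_add_sum hT.connected hconn hbag S (x := u)
  have hN : (T.neighborFinset u).Nonempty := by
    by_contra h
    rw [Finset.not_nonempty_iff_eq_empty.mp h, Finset.sum_empty] at hsum
    linarith
  obtain ⟨c, hc, hct⟩ := Finset.exists_le_of_sum_le hN (f := fun _ => t) <| calc
    ∑ _ ∈ T.neighborFinset u, t = T.degree u * t := by
      rw [Finset.sum_const, nsmul_eq_mul, card_neighborFinset_eq_degree]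
    _ ≤ 3 * t := by gcongr; exact_mod_cast hdeg u
    _ ≤ _ := by linarith
  have hcu := (mem_neighborFinset _ _ _).mp hc
  exact ⟨c, u, hcu.symm, hS.mem_of_nonempty_inter_side hT huS hcu
    (nonempty_of_le_ncard_bagVertices ht hct), huS, hct⟩

/-- Take a heavy side `S ∩ side T x y` with `side T x y` minimal: the other branches at `x`
are then light. -/
lemma exists_balanced_cut_edge (hT : T.IsTree)
    (hconn : ∀ v : V, (T.induce {z : α | v ∈ B z}).Connected) (hdeg : ∀ z, T.degree z ≤ 3)
    (hbag : ∀ z, (B z).ncard ≤ b) (ht : 0 < t) (hS : IsPathConvex T S)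
    (hw : 3 * t + b ≤ (bagVertices B S).ncard) :
    ∃ x y, T.Adj x y ∧ x ∈ S ∧ y ∈ S ∧ t ≤ (bagVertices B (S ∩ side T x y)).ncard ∧
      ((bagVertices B S).ncard : ℝ) ≤ 2 * t + b + (bagVertices B (S ∩ side T y x)).ncard := by
  classical
  set C := {p : α × α | T.Adj p.1 p.2 ∧ p.1 ∈ S ∧ p.2 ∈ S ∧
    t ≤ (bagVertices B (S ∩ side T p.1 p.2)).ncard}
  have hC : C.Nonempty := by
    obtain ⟨x, y, h⟩ := exists_adj_le_ncard_bagVertices_inter_side hT hconn hdeg hbag ht hS hw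
    exact ⟨(x, y), h⟩
  obtain ⟨⟨x, y⟩, ⟨hxy, hxS, hyS, hheavy⟩, hmin⟩ :=
    Set.exists_min_image C (fun p => (side T p.1 p.2).ncard) (Set.toFinite C) hC
  dsimp only at hxy hxS hyS hheavy hmin
  have hlight : ∀ c ∈ (T.neighborFinset x).erase y,
      ((bagVertices B (S ∩ side T c x)).ncard : ℝ) ≤ t := by
    intro c hc
    obtain ⟨hcy, hxc⟩ := Finset.mem_erase.mp hc
    rw [mem_neighborFinset] at hxc
    by_contra! hgt
    have hcS := hS.mem_of_nonempty_inter_side hT hxS hxc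
      (nonempty_of_le_ncard_bagVertices ht hgt.le)
    exact (Set.ncard_lt_ncard (side_ssubset_side hT.isAcyclic hxc hcy)).not_ge
      (hmin (c, x) ⟨hxc.symm, hcS, hxS, hgt.le⟩)
  have hrest : ∑ c ∈ (T.neighborFinset x).erase y, ((bagVertices B (S ∩ side T c x)).ncard : ℝ)
      ≤ 2 * t := calc
    _ ≤ ((T.neighborFinset x).erase y).card • t := Finset.sum_le_card_nsmul _ _ _ hlight
    _ ≤ 2 * t := by
      rw [nsmul_eq_mul, Finset.card_erase_of_mem ((mem_neighborFinset _ _ _).mpr hxy),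
        card_neighborFinset_eq_degree]
      gcongr
      have := hdeg x
      norm_cast
      omega
  have hsum := cast_ncard_bagVertices_le_add_sum hT.connected hconn hbag S (x := x)
  rw [← Finset.add_sum_erase _ _ ((mem_neighborFinset _ _ _).mpr hxy)] at hsum
  exact ⟨x, y, hxy, hxS, hyS, hheavy, by linarith⟩

end HeavySide

lemma SimpleGraph.ConnectedComponent.range_supp_eq_parts {α : Type*} {H : SimpleGraph α}
    (P : Finpartition (Set.univ : Set α))
    (hreach : ∀ A ∈ P.parts, ∀ u ∈ A, ∀ v ∈ A, H.Reachable u v)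
    (hadj : ∀ ⦃u v⦄, H.Adj u v → ∃ A ∈ P.parts, u ∈ A ∧ v ∈ A) :
    Set.range (ConnectedComponent.supp (G := H)) = P.parts := by
  have hsupp : ∀ A ∈ P.parts, ∀ u ∈ A, (H.connectedComponentMk u).supp = A := by
    intro A hA u hu
    ext v
    rw [ConnectedComponent.mem_supp_iff, ConnectedComponent.eq]
    refine ⟨fun hvu => ?_, fun hv => (hreach A hA u hu v hv).symm⟩
    have huv := (reachable_iff_reflTransGen u v).mp hvu.symm
    clear hvu
    induction huv with
    | refl => exact hu
    | tail _ hwz ih =>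
      obtain ⟨A', hA', hw, hz⟩ := hadj hwz
      rwa [P.disjoint.elim_set hA hA' _ ih hw]
  ext A
  constructor
  · rintro ⟨c, rfl⟩
    induction c using ConnectedComponent.ind with | h u => ?_
    obtain ⟨A, ⟨hA, hu⟩, -⟩ := P.isPartition_parts.2 u
    rw [hsupp A hA u hu]
    exact hA
  · intro hA
    obtain ⟨u, hu⟩ := Set.nonempty_iff_ne_empty.mpr (P.ne_bot hA)
    exact ⟨_, hsupp A hA u hu⟩

section Cut

variable {V α : Type*} {T : SimpleGraph α} {B : α → Set V} {S : Set α} {t : ℝ}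

/-- `R` is the set of edges of `T` between distinct parts of `P`, a partition of `S` into
subtrees of weight at least `t`. -/
structure IsBalancedCut (T : SimpleGraph α) (B : α → Set V) (t : ℝ) (P : Finpartition S)
    (R : Set (Sym2 α)) : Prop where
  isPathConvex : ∀ A ∈ P.parts, IsPathConvex T A
  le_ncard_bagVertices : ∀ A ∈ P.parts, t ≤ (bagVertices B A).ncard
  subset_edgeSet : R ⊆ T.edgeSet
  card_parts : P.parts.card = R.ncard + 1
  mem_iff : ∀ ⦃u v⦄, T.Adj u v → (s(u, v) ∈ R ↔ u ∈ S ∧ v ∈ S ∧ ∀ A ∈ P.parts, u ∈ A → v ∉ A)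

lemma exists_isBalancedCut_empty (hS : IsPathConvex T S) (ht : 0 < t)
    (hw : t ≤ (bagVertices B S).ncard) : ∃ P : Finpartition S, IsBalancedCut T B t P ∅ := by
  refine ⟨.indiscrete (nonempty_of_le_ncard_bagVertices ht hw).ne_empty, ?_, ?_, Set.empty_subset _,
    ?_, fun u v _ => ?_⟩ <;> simp_all

lemma IsBalancedCut.exists_extend [Finite α] {x y : α} (hT : T.IsTree) (hxy : T.Adj x y)
    (hxS : x ∈ S) (hyS : y ∈ S) (hS : IsPathConvex T S) (ht : 0 < t)
    (hA : t ≤ (bagVertices B (S ∩ side T x y)).ncard) {P' : Finpartition (S ∩ side T y x)}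
    {R' : Set (Sym2 α)} (h : IsBalancedCut T B t P' R') :
    ∃ (P : Finpartition S) (R : Set (Sym2 α)),
      IsBalancedCut T B t P R ∧ R.ncard = R'.ncard + 1 := by
  classical
  have hdisj : Disjoint (side T x y) (side T y x) := disjoint_side hT.isAcyclic hxy
  have hxS' : x ∉ S ∩ side T y x := fun hx => Set.disjoint_left.mp hdisj mem_side_self hx.2
  have hyA : y ∉ S ∩ side T x y := fun hy => notMem_side hT.isAcyclic hxy hy.2
  have hxR' : s(x, y) ∉ R' := fun hR => hxS' ((h.mem_iff hxy).mp hR).1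
  have hunion : S ∩ side T y x ⊔ S ∩ side T x y = S := by
    change _ ∪ _ = S
    rw [← Set.inter_union_distrib_left, Set.union_comm,
      side_union_side hT.connected hxy, Set.inter_univ]
  let P := P'.extend (nonempty_of_le_ncard_bagVertices ht hA).ne_empty
    (hdisj.symm.mono Set.inter_subset_right Set.inter_subset_right) hunion
  refine ⟨P, insert s(x, y) R', ⟨?_, ?_, ?_, ?_, fun u v huv => ?_⟩,
    Set.ncard_insert_of_notMem hxR'⟩
  · simp only [P, Finpartition.extend_parts, Finset.forall_mem_insert]
    exact ⟨hS.inter (isPathConvex_side hT.isAcyclic hxy), h.isPathConvex⟩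
  · simp only [P, Finpartition.extend_parts, Finset.forall_mem_insert]
    exact ⟨hA, h.le_ncard_bagVertices⟩
  · exact Set.insert_subset hxy h.subset_edgeSet
  · rw [Finpartition.card_extend, h.card_parts, Set.ncard_insert_of_notMem hxR']
  · have hparts : ∀ A ∈ P'.parts, A ⊆ S ∩ side T y x := fun A hA => P'.le hA
    simp only [P, Finpartition.extend_parts, Finset.forall_mem_insert, Set.mem_insert_iff,
      h.mem_iff huv]
    by_cases he : s(u, v) = s(x, y)
    · rcases Sym2.eq_iff.mp he with ⟨rfl, rfl⟩ | ⟨rfl, rfl⟩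
      · exact iff_of_true (Or.inl rfl) ⟨hxS, hyS, fun _ => hyA,
          fun A' hA' hx => (hxS' (hparts A' hA' hx)).elim⟩
      · exact iff_of_true (Or.inl he) ⟨hyS, hxS, fun hy => (hyA hy).elim,
          fun A' hA' _ hx => hxS' (hparts A' hA' hx)⟩
    · rcases (side_union_side hT.connected hxy).symm ▸ Set.mem_univ u with hu | hu
      · have hv := mem_side_of_adj hu huv he
        have hu' : u ∉ S ∩ side T y x := fun h' => Set.disjoint_left.mp hdisj hu h'.2
        simp only [he, hu', false_and, or_self, false_iff]
        exact fun ⟨huS, hvS, hsep, _⟩ => hsep ⟨huS, hu⟩ ⟨hvS, hv⟩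
      · have hv := mem_side_of_adj hu huv (fun h' => he (h'.trans Sym2.eq_swap))
        have hu' : u ∉ S ∩ side T x y := fun h' => Set.disjoint_left.mp hdisj h'.2 hu
        simp only [he, hu', Set.mem_inter_iff, hu, hv, and_true, false_or, false_imp_iff, true_and]

lemma IsBalancedCut.range_supp_eq_parts {P : Finpartition (Set.univ : Set α)}
    {R : Set (Sym2 α)} (h : IsBalancedCut T B t P R)
    (hT : T.Connected) :
    Set.range (ConnectedComponent.supp (G := T.deleteEdges R)) = P.parts := by
  refine ConnectedComponent.range_supp_eq_parts P (fun A hA u hu v hv => ?_) fun u v huv => ?_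
  · obtain ⟨p, hp⟩ := (h.isPathConvex A hA).exists_walk hT hu hv
    refine (p.toDeleteEdges R fun e he heR => ?_).reachable
    induction e using Sym2.ind with
    | h a c =>
      exact ((h.mem_iff (p.adj_of_mem_edges he)).mp heR).2.2 A hA
        (hp a (p.fst_mem_support_of_mem_edges he)) (hp c (p.snd_mem_support_of_mem_edges he))
  · obtain ⟨hTuv, huvR⟩ := deleteEdges_adj.mp huv
    simpa [h.mem_iff hTuv] using huvR

end Cut

theorem exists_isBalancedCut {V α : Type*} [Finite V] [Fintype α] {T : SimpleGraph α}
    [DecidableRel T.Adj] {B : α → Set V} {b : ℕ} {t : ℝ} (hT : T.IsTree)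
    (hconn : ∀ v : V, (T.induce {z : α | v ∈ B z}).Connected) (hdeg : ∀ z, T.degree z ≤ 3)
    (hbag : ∀ z, (B z).ncard ≤ b) (ht : 0 < t) (k : ℕ) {S : Set α} (hS : IsPathConvex T S)
    (hw : (2 * k + 1) * t + k * b ≤ (bagVertices B S).ncard) :
    ∃ (P : Finpartition S) (R : Set (Sym2 α)), IsBalancedCut T B t P R ∧ R.ncard = k := by
  induction k generalizing S with
  | zero =>
    obtain ⟨P, hP⟩ := exists_isBalancedCut_empty hS ht (by simpa using hw)
    exact ⟨P, ∅, hP, Set.ncard_empty _⟩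
  | succ k ih =>
    push_cast at hw
    have hkt : 0 ≤ (k : ℝ) * t := by positivity
    have hkb : 0 ≤ (k : ℝ) * b := by positivity
    obtain ⟨x, y, hxy, hxS, hyS, hA, hrest⟩ :=
      exists_balanced_cut_edge hT hconn hdeg hbag ht hS (by linarith)
    obtain ⟨P', R', h', hR'⟩ :=
      ih (hS.inter (isPathConvex_side hT.isAcyclic hxy.symm)) (by linarith)
    obtain ⟨P, R, h, hR⟩ := h'.exists_extend hT hxy hxS hyS hS ht hA
    exact ⟨P, R, h, hR'.symm ▸ hR⟩

/-- Lemma 2.1. Let `ℓ ≥ 0` and `b ≥ 2` be integers, and let `G` be a graph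
with `n ≥ (3ℓ+1)b` vertices having a tree decomposition `(T, B)` in which `T` has maximum
degree at most `3` and every bag has at most `b` vertices. Then there is a set `R` of exactly
`ℓ` edges of `T` such that `T − R` has exactly `ℓ+1` connected components, and every connected
component `Q` of `T − R` satisfies `|G[Q]| ≥ (n − ℓb)/(2ℓ+1)`. -/
theorem tree_decomposition_separator {V α : Type*} [Fintype V] [Fintype α]
    (ℓ b : ℕ) (hb : 2 ≤ b)
    (G : SimpleGraph V) (T : SimpleGraph α) (B : α → Set V)
    (htd : IsTreeDecomp G T B)
    (hdeg : ∀ z : α, (T.neighborSet z).ncard ≤ 3)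
    (hbag : ∀ z : α, (B z).ncard ≤ b)
    (hn : (3 * ℓ + 1) * b ≤ Fintype.card V) :
    ∃ R : Set (Sym2 α), R ⊆ T.edgeSet ∧ R.ncard = ℓ ∧
      Nat.card ((T.deleteEdges R).ConnectedComponent) = ℓ + 1 ∧
      ∀ Q : (T.deleteEdges R).ConnectedComponent,
        ((Fintype.card V : ℝ) - ℓ * b) / (2 * ℓ + 1) ≤ ((bagVertices B Q.supp).ncard : ℝ) := by
  classical
  obtain ⟨hT, hcov, -, hconn⟩ := htd
  set t : ℝ := ((Fintype.card V : ℝ) - ℓ * b) / (2 * ℓ + 1)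
  have hn' : ((3 * ℓ + 1) * b : ℝ) ≤ Fintype.card V := by exact_mod_cast hn
  have hb' : (2 : ℝ) ≤ b := by exact_mod_cast hb
  have ht : 0 < t := div_pos (by nlinarith) (by positivity)
  have hw : (2 * ℓ + 1) * t + ℓ * b ≤ (bagVertices B .univ).ncard := by
    rw [bagVertices_univ hcov, Set.ncard_univ, Nat.card_eq_fintype_card,
      mul_div_cancel₀ _ (by positivity)]
    linarith
  have hdeg' : ∀ z, T.degree z ≤ 3 := fun z => by
    rw [← card_neighborSet_eq_degree, ← Nat.card_eq_fintype_card, Nat.card_coe_set_eq]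
    exact hdeg z
  obtain ⟨P, R, hcut, hR⟩ := exists_isBalancedCut hT hconn hdeg' hbag ht ℓ isPathConvex_univ hw
  have hrange := hcut.range_supp_eq_parts hT.connected
  refine ⟨R, hcut.subset_edgeSet, hR, ?_, fun Q => hcut.le_ncard_bagVertices _ ?_⟩
  · rw [← Nat.card_range_of_injective ConnectedComponent.supp_injective, hrange,
      Nat.card_coe_set_eq, Set.ncard_coe_finset, hcut.card_parts, hR]
  · rw [← Finset.mem_coe, ← hrange]
    exact ⟨Q, rfl⟩
end

section
/- Let G be a graph and (T, {B_z : z ∈ V(T)}) a tree decomposition of G, and let xy be an edge of T. Let G' be the subgraph of G induced by the vertex set G[T(y,x)]. Then the pair (T(y,x), {B_z \ (B_x ∩ B_y) : z ∈ V(T(y,x))}) is a tree decomposition of G'. -/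
open SimpleGraph

namespace SimpleGraph

variable {α : Type*} {T : SimpleGraph α}

lemma side_eq_supp (x y : α) :
    side T x y = ((T.deleteEdges {s(x, y)}).connectedComponentMk x).supp := by
  ext z
  simp only [side, Set.mem_ofPred_eq, ConnectedComponent.mem_supp_iff,
    ConnectedComponent.eq, reachable_comm]

lemma connected_induce_side (x y : α) : (T.induce (side T x y)).Connected := by
  rw [side_eq_supp]
  refine (ConnectedComponent.maximal_connected_induce_supp _).1.mono fun a b h => ?_
  exact (h : (T.deleteEdges {s(x, y)}).Adj a b).1

lemma IsTree.induce_side (hT : T.IsTree) (x y : α) : (T.induce (side T x y)).IsTree :=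
  ⟨connected_induce_side x y, hT.isAcyclic.induce _⟩

lemma IsAcyclic.notMem_side (hT : T.IsAcyclic) {x y : α} (h : T.Adj x y) :
    y ∉ side T x y :=
  isBridge_iff.mp (isAcyclic_iff_forall_adj_isBridge.mp hT h)

lemma Connected.induce_subtype {S A : Set α} (hAS : A ⊆ S) (hA : (T.induce A).Connected) :
    ((T.induce S).induce {z : S | (z : α) ∈ A}).Connected :=
  hA.map ⟨fun a : A => ⟨⟨a, hAS a.2⟩, a.2⟩, id⟩ fun b => ⟨⟨b.1.1, b.2⟩, rfl⟩

end SimpleGraph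

lemma mem_of_mem_bagVertices {V α : Type*} {B : α → Set V} {Q : Set α} {v : V} {z : α}
    (hv : v ∈ bagVertices B Q) (hz : v ∈ B z) : z ∈ Q := by
  by_contra hzQ
  exact hv.2 z hzQ hz

theorem IsTreeDecomp.restrict {V α : Type*} {G : SimpleGraph V} {T : SimpleGraph α}
    {B : α → Set V} (htd : IsTreeDecomp G T B) {S : Set α} (hS : (T.induce S).IsTree)
    {X : Set V} (hX : ∀ v ∈ bagVertices B S, v ∉ X) :
    IsTreeDecomp (G.induce (bagVertices B S)) (T.induce S)
      (fun z : S => {v : bagVertices B S | (v : V) ∈ B (z : α) \ X}) := by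
  obtain ⟨-, -, hedge, hconn⟩ := htd
  refine ⟨hS, ?_, ?_, ?_⟩
  · rintro ⟨v, hv⟩
    obtain ⟨z, hzS, hz⟩ := hv.1
    exact ⟨⟨z, hzS⟩, hz, hX v hv⟩
  · rintro ⟨v, hv⟩ ⟨w, hw⟩ hvw
    obtain ⟨z, hvz, hwz⟩ := hedge v w hvw
    exact ⟨⟨z, mem_of_mem_bagVertices hv hvz⟩, ⟨hvz, hX v hv⟩, ⟨hwz, hX w hw⟩⟩
  · rintro ⟨v, hv⟩
    have hbags : {z : S | (⟨v, hv⟩ : bagVertices B S) ∈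
        {v' : bagVertices B S | (v' : V) ∈ B (z : α) \ X}} =
        {z : S | (z : α) ∈ {z : α | v ∈ B z}} := by
      ext z
      simp [hX v hv]
    rw [hbags]
    exact (hconn v).induce_subtype fun z => mem_of_mem_bagVertices hv

/-- Let `xy` be an edge of `T` and let `G'` be the subgraph of `G` induced
by the vertex set `G[T(y,x)]`. Then `(T(y,x), {B z \ (B x ∩ B y) : z ∈ T(y,x)})` is a tree
decomposition of `G'`. -/
theorem treeDecomp_restrict_side {V α : Type*}
    (G : SimpleGraph V) (T : SimpleGraph α) (B : α → Set V)
    (htd : IsTreeDecomp G T B)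
    {x y : α} (hxy : T.Adj x y) :
    IsTreeDecomp (G.induce (bagVertices B (side T y x))) (T.induce (side T y x))
      (fun z : side T y x =>
        {v : bagVertices B (side T y x) | (v : V) ∈ B (z : α) \ (B x ∩ B y)}) := by
  have hx : x ∉ side T y x := htd.1.isAcyclic.notMem_side hxy.symm
  exact htd.restrict (htd.1.induce_side y x) fun v hv hvxy =>
    hx (mem_of_mem_bagVertices hv hvxy.1)
end
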